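/- Let G be a connected graph, c ∈ V(G) with |V(G)| ≥ 2, and C = [c]_R the R-class of c (x R y iff N(x) = N(y)). Then the graph G' = G ∖ (C ∖ {c}) is connected, and for all vertices x, y ∈ V(G) ∖ C, d_{G'}(x,y) = d_G(x,y); moreover d_{G'}(c,x) = d_G(c,x) for all x ∈ V(G) ∖ C. -/
import Mathlib


open scoped Classical

noncomputable section

variable {V : Type*}

private lemma hom_dist_le {W : Type*} {G : SimpleGraph V} {H : SimpleGraph W}
    (φ : G →g H) {u v : V} (h : G.Reachable u v) :
    H.dist (φ u) (φ v) ≤ G.dist u v := by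
  obtain ⟨p, hp⟩ := h.exists_walk_length_eq_dist
  calc H.dist (φ u) (φ v) ≤ (p.map φ).length := SimpleGraph.dist_le _
    _ = G.dist u v := by rw [SimpleGraph.Walk.length_map, hp]

/-- Let `G` be connected with at least two vertices, `c ∈ V(G)` and
`C = [c]_R` the class of `c` under `x R y ↔ N(x) = N(y)`. Then `G' = G ∖ (C ∖ {c})`
(the subgraph induced on `(V ∖ C) ∪ {c}`) is connected; distances between vertices outside `C`
are preserved, as are distances from `c` to vertices outside `C`. -/
theorem reduction_preserves_connectivity_and_distances [Fintype V]
    (G : SimpleGraph V) (hG : G.Connected) (hcard : 2 ≤ Fintype.card V)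
    (c : V) (C : Set V) (hC : C = {x : V | G.neighborSet x = G.neighborSet c})
    (s : Set V) (hs : s = {x : V | x ∉ C} ∪ {c}) (hcs : c ∈ s) :
    (G.induce s).Connected ∧
    (∀ x y : s, (x : V) ∉ C → (y : V) ∉ C →
      (G.induce s).dist x y = G.dist (x : V) (y : V)) ∧
    (∀ x : s, (x : V) ∉ C →
      (G.induce s).dist ⟨c, hcs⟩ x = G.dist c (x : V)) := by
  classical
  -- adjacent vertices have distinct neighborhoods
  have hne : ∀ {u v : V}, G.Adj u v → G.neighborSet u ≠ G.neighborSet v := by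
    intro u v h hEq
    have hv : v ∈ G.neighborSet u := h
    rw [hEq] at hv
    exact G.irrefl hv
  -- the retraction map
  have fmem : ∀ v : V, (if v ∈ C then c else v) ∈ s := by
    intro v
    by_cases hv : v ∈ C
    · simp [hs, hv]
    · simp [hs, hv]
  let f : G →g (G.induce s) :=
    { toFun := fun v => ⟨if v ∈ C then c else v, fmem v⟩
      map_rel' := by
        intro u v huv
        show G.Adj (if u ∈ C then c else u) (if v ∈ C then c else v)
        by_cases hu : u ∈ C <;> by_cases hv : v ∈ C <;> simp only [hu, hv, if_pos, if_neg,
          if_true, if_false]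
        · exfalso
          rw [hC] at hu hv
          exact hne huv (hu.trans hv.symm)
        · -- u ∈ C, v ∉ C : need Adj c v
          rw [hC] at hu
          have : v ∈ G.neighborSet u := huv
          rw [hu] at this
          exact this
        · rw [hC] at hv
          have : u ∈ G.neighborSet v := huv.symm
          rw [hv] at this
          exact this.symm
        · exact huv }
  have hf_fix : ∀ x : s, f (x : V) = x := by
    rintro ⟨x, hx⟩
    apply Subtype.ext
    show (if x ∈ C then c else x) = x
    rcases (hs ▸ hx : x ∈ {x : V | x ∉ C} ∪ {c}) with h | h
    · simp [Set.mem_setOf_eq.mp h]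
    · have hx' : x = c := h
      rw [hx']
      split <;> rfl
  have hreach : ∀ a b : s, (G.induce s).Reachable a b := by
    intro a b
    have := (hG (a : V) (b : V))
    have h2 : (G.induce s).Reachable (f a) (f b) := this.map f
    rwa [hf_fix a, hf_fix b] at h2
  haveI : Nonempty s := ⟨⟨c, hcs⟩⟩
  have hconn : (G.induce s).Connected :=
    SimpleGraph.Connected.mk hreach
  -- key distance equality
  have key : ∀ a b : s, (G.induce s).dist a b = G.dist (a : V) (b : V) := by
    intro a b
    have h1 : (G.induce s).dist a b ≤ G.dist (a : V) (b : V) := by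
      have := hom_dist_le f (hG (a : V) (b : V))
      rwa [hf_fix a, hf_fix b] at this
    have h2 : G.dist (a : V) (b : V) ≤ (G.induce s).dist a b := by
      have := hom_dist_le (SimpleGraph.Embedding.induce s).toHom (hreach a b)
      exact this
    omega
  exact ⟨hconn, fun x y _ _ => key x y, fun x _ => key ⟨c, hcs⟩ x⟩

end
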